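/- Spectrum of the propagation matrix: Suppose in addition that every node of G has a self-loop, i.e. A(s,s) = 1 for every s ∈ V. Then every complex eigenvalue of P = D^{−β} A D^{β−1} is real and lies in the half-open interval (−1, 1]; consequently, for every α ∈ (0,1), every eigenvalue of I − (1−α)P lies in the interval [α, 2−α), and in particular I − (1−α)P is invertible. -/

import Mathlib

/-!
Conjugation by the diagonal matrix `D^{γ-β}` turns `P_β = D^{-β} A D^{β-1}` into `P_γ`, so all the
`P_β` have the same spectrum. For `β = 1/2` the matrix is symmetric, so the spectrum is real. For
`β = 1` it is the row-stochastic matrix `D⁻¹A`, whose diagonal entries `1/d(s)` are positive thanks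
to the self-loops; its Gershgorin discs `|z - 1/d(s)| ≤ 1 - 1/d(s)` lie in the strip
`-1 < Re z ≤ 1`. The claims on `I - (1-α)P` follow by the spectral mapping `z ↦ 1 - (1-α)z`.
-/

open Matrix

section

variable {ι : Type*} [Fintype ι] [DecidableEq ι]

theorem spectrum_diagonal_mul_mul_diagonal_inv {K : Type*} [Field K]
    {w : ι → K} (hw : ∀ i, w i ≠ 0) (M : Matrix ι ι K) :
    spectrum K (diagonal w * M * diagonal w⁻¹) = spectrum K M := by
  let u : (Matrix ι ι K)ˣ :=
    ⟨diagonal w, diagonal w⁻¹, by simp [diagonal_mul_diagonal, hw],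
      by simp [diagonal_mul_diagonal, hw]⟩
  exact spectrum.units_conjugate (u := u)

open scoped Matrix.Norms.L2Operator in
theorem im_eq_zero_of_mem_spectrum_map_ofReal {M : Matrix ι ι ℝ} (hM : M.IsSymm) {μ : ℂ}
    (hμ : μ ∈ spectrum ℂ (M.map Complex.ofReal)) : μ.im = 0 := by
  have hHerm : (M.map Complex.ofReal).IsHermitian := by
    ext i j
    simp [conjTranspose_apply, hM.apply]
  exact IsSelfAdjoint.im_eq_zero_of_mem_spectrum hHerm hμ

theorem re_mem_Ioc_of_mem_spectrum_map_ofReal {M : Matrix ι ι ℝ} (hM : M ∈ rowStochastic ℝ ι)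
    (hdiag : ∀ s, 0 < M s s) {μ : ℂ} (hμ : μ ∈ spectrum ℂ (M.map Complex.ofReal)) :
    μ.re ∈ Set.Ioc (-1) 1 := by
  obtain ⟨hM0, hrow⟩ := mem_rowStochastic_iff_sum.mp hM
  rw [← spectrum_toLin', ← Module.End.hasEigenvalue_iff_mem_spectrum] at hμ
  obtain ⟨k, hk⟩ := eigenvalue_mem_ball hμ
  have hradius : ∑ j ∈ Finset.univ.erase k, ‖(M.map Complex.ofReal) k j‖ = 1 - M k k := by
    simp [Complex.norm_real, Real.norm_of_nonneg (hM0 k _), ← hrow k,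
      Finset.sum_erase_eq_sub (Finset.mem_univ k)]
  rw [hradius, Metric.mem_closedBall, Complex.dist_eq] at hk
  have hre := (Complex.abs_re_le_norm (μ - M k k)).trans hk
  simp only [Complex.sub_re, Complex.ofReal_re] at hre
  constructor <;> linarith [abs_le.mp hre, hdiag k]

theorem isUnit_of_zero_notMem_spectrum_map_ofReal {M : Matrix ι ι ℝ}
    (h : 0 ∉ spectrum ℂ (M.map Complex.ofReal)) : IsUnit M := by
  have hdet : (M.map Complex.ofReal).det = M.det := (Complex.ofRealHom.map_det M).symm
  rw [spectrum.zero_notMem_iff, isUnit_iff_isUnit_det, hdet, isUnit_iff_ne_zero,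
    Complex.ofReal_ne_zero] at h
  exact (isUnit_iff_isUnit_det M).mpr h.isUnit

theorem exists_eq_one_sub_mul_of_mem_spectrum_map_ofReal {M : Matrix ι ι ℝ} {c : ℝ} (hc : c ≠ 0)
    {μ : ℂ} (hμ : μ ∈ spectrum ℂ ((1 - c • M).map Complex.ofReal)) :
    ∃ ν ∈ spectrum ℂ (M.map Complex.ofReal), μ = 1 - c * ν := by
  have hmap : (1 - c • M).map Complex.ofReal
      = algebraMap ℂ _ 1 - (Units.mk0 (c : ℂ) (by exact_mod_cast hc)) • M.map Complex.ofReal := by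
    ext i j
    by_cases h : i = j <;> simp [one_apply, h]
  rw [hmap, ← spectrum.singleton_sub_eq, spectrum.unit_smul_eq_smul] at hμ
  obtain ⟨_, rfl, _, ⟨ν, hν, rfl⟩, rfl⟩ := hμ
  exact ⟨ν, hν, rfl⟩

end

section

variable {ι : Type*}

noncomputable def propagationMatrix (A : Matrix ι ι ℝ) (d : ι → ℝ) (β : ℝ) : Matrix ι ι ℝ :=
  of fun s t => A s t / (d s ^ β * d t ^ (1 - β))

variable {A : Matrix ι ι ℝ} {d : ι → ℝ}

theorem propagationMatrix_eq_diagonal_mul_mul_diagonal_inv [Fintype ι] [DecidableEq ι]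
    (hd : ∀ s, 0 < d s) (β γ : ℝ) :
    propagationMatrix A d β = diagonal (fun s => d s ^ (γ - β)) * propagationMatrix A d γ *
      diagonal (fun s => d s ^ (γ - β))⁻¹ := by
  ext s t
  have hpow : ∀ s (x y : ℝ), d s ^ (x - y) = d s ^ x / d s ^ y :=
    fun s x y => Real.rpow_sub (hd s) x y
  have hpos : ∀ s (x : ℝ), d s ^ x ≠ 0 := fun s x => (Real.rpow_pos_of_pos (hd s) x).ne'
  simp only [propagationMatrix, diagonal_mul, mul_diagonal, of_apply, Pi.inv_apply, hpow,
    Real.rpow_one]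
  field_simp [hpos, (hd t).ne']

theorem spectrum_propagationMatrix_map_ofReal [Fintype ι] [DecidableEq ι] (hd : ∀ s, 0 < d s)
    (β γ : ℝ) :
    spectrum ℂ ((propagationMatrix A d β).map Complex.ofReal) =
      spectrum ℂ ((propagationMatrix A d γ).map Complex.ofReal) := by
  set w : ι → ℂ := fun s => ((d s ^ (γ - β) : ℝ) : ℂ)
  have hw : ∀ s, w s ≠ 0 := fun s => Complex.ofReal_ne_zero.mpr (Real.rpow_pos_of_pos (hd s) _).ne'
  have hconj : (propagationMatrix A d β).map Complex.ofReal =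
      diagonal w * (propagationMatrix A d γ).map Complex.ofReal * diagonal w⁻¹ := by
    rw [propagationMatrix_eq_diagonal_mul_mul_diagonal_inv hd β γ]
    ext s t
    simp [w, diagonal_mul, mul_diagonal]
  rw [hconj, spectrum_diagonal_mul_mul_diagonal_inv hw]

theorem isSymm_propagationMatrix_half (hA : A.IsSymm) : (propagationMatrix A d (1 / 2)).IsSymm := by
  ext s t
  simp only [propagationMatrix, transpose_apply, of_apply, hA.apply]
  norm_num [mul_comm]

theorem propagationMatrix_one_apply (s t : ι) : propagationMatrix A d 1 s t = A s t / d s := by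
  simp [propagationMatrix]

theorem propagationMatrix_one_mem_rowStochastic [Fintype ι] [DecidableEq ι]
    (hA0 : ∀ s t, 0 ≤ A s t) (hd : ∀ s, d s = ∑ t, A s t) (hdpos : ∀ s, 0 < d s) :
    propagationMatrix A d 1 ∈ rowStochastic ℝ ι := by
  refine mem_rowStochastic_iff_sum.mpr ⟨fun s t => ?_, fun s => ?_⟩
  · rw [propagationMatrix_one_apply]
    exact div_nonneg (hA0 s t) (hdpos s).le
  · simp only [propagationMatrix_one_apply, ← Finset.sum_div, ← hd, div_self (hdpos s).ne']

theorem mem_spectrum_propagationMatrix [Fintype ι] [DecidableEq ι] (hA : A.IsSymm)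
    (hA0 : ∀ s t, 0 ≤ A s t) (hdiag : ∀ s, 0 < A s s) (hd : ∀ s, d s = ∑ t, A s t) (β : ℝ)
    {μ : ℂ} (hμ : μ ∈ spectrum ℂ ((propagationMatrix A d β).map Complex.ofReal)) :
    μ.im = 0 ∧ μ.re ∈ Set.Ioc (-1) 1 := by
  have hdpos : ∀ s, 0 < d s := fun s =>
    (hdiag s).trans_le (hd s ▸ Finset.single_le_sum (fun t _ => hA0 s t) (Finset.mem_univ s))
  refine ⟨im_eq_zero_of_mem_spectrum_map_ofReal (isSymm_propagationMatrix_half (d := d) hA) ?_,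
    re_mem_Ioc_of_mem_spectrum_map_ofReal (propagationMatrix_one_mem_rowStochastic hA0 hd hdpos)
      (fun s => ?_) ?_⟩
  · rwa [← spectrum_propagationMatrix_map_ofReal hdpos β]
  · rw [propagationMatrix_one_apply]
    exact div_pos (hdiag s) (hdpos s)
  · rwa [← spectrum_propagationMatrix_map_ofReal hdpos β]

end

theorem propagation_matrix_spectrum_general {n : ℕ}
    (A : Matrix (Fin n) (Fin n) ℝ) (hA_symm : A.IsSymm)
    (hA01 : ∀ s t, A s t = 0 ∨ A s t = 1)
    (hloop : ∀ s, A s s = 1)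
    (d : Fin n → ℝ) (hd : ∀ s, d s = ∑ t, A s t)
    (β : ℝ)
    (P : Matrix (Fin n) (Fin n) ℝ)
    (hP : ∀ s t, P s t = A s t / (d s ^ β * d t ^ (1 - β))) :
    (∀ μ : ℂ, μ ∈ spectrum ℂ (P.map (Complex.ofReal)) →
      μ.im = 0 ∧ -1 < μ.re ∧ μ.re ≤ 1) ∧
    ∀ α : ℝ, 0 < α → α < 1 →
      (∀ μ : ℂ, μ ∈ spectrum ℂ
          (((1 : Matrix (Fin n) (Fin n) ℝ) - (1 - α) • P).map (Complex.ofReal)) →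
        μ.im = 0 ∧ α ≤ μ.re ∧ μ.re < 2 - α) ∧
      IsUnit ((1 : Matrix (Fin n) (Fin n) ℝ) - (1 - α) • P) := by
  have hPeq : P = propagationMatrix A d β := by ext s t; exact hP s t
  have hA0 : ∀ s t, 0 ≤ A s t := fun s t => by rcases hA01 s t with h | h <;> simp [h]
  have hPspec : ∀ μ ∈ spectrum ℂ (P.map Complex.ofReal), μ.im = 0 ∧ μ.re ∈ Set.Ioc (-1) 1 :=
    fun μ hμ => mem_spectrum_propagationMatrix hA_symm hA0 (fun s => (hloop s).symm ▸ one_pos) hd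
      β (hPeq ▸ hμ)
  refine ⟨fun μ hμ => ⟨(hPspec μ hμ).1, (hPspec μ hμ).2⟩, fun α hα0 hα1 => ?_⟩
  have hMspec : ∀ μ ∈ spectrum ℂ (((1 : Matrix (Fin n) (Fin n) ℝ) - (1 - α) • P).map
      Complex.ofReal), μ.im = 0 ∧ α ≤ μ.re ∧ μ.re < 2 - α := by
    intro μ hμ
    obtain ⟨ν, hν, rfl⟩ := exists_eq_one_sub_mul_of_mem_spectrum_map_ofReal (by linarith) hμ
    obtain ⟨hνim, hνlo, hνhi⟩ := hPspec ν hν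
    simp only [Complex.sub_im, Complex.sub_re, Complex.mul_im, Complex.mul_re, Complex.one_im,
      Complex.one_re, Complex.ofReal_im, Complex.ofReal_re, hνim]
    refine ⟨by ring, by nlinarith, by nlinarith⟩
  exact ⟨hMspec, isUnit_of_zero_notMem_spectrum_map_ofReal fun h0 => by
    linarith [(hMspec 0 h0).2.1, Complex.zero_re]⟩

/-- Spectrum of the propagation matrix: if every node has a self-loop, every
complex eigenvalue of `P = D^{−β} A D^{β−1}` is real and lies in `(−1, 1]`;
consequently every eigenvalue of `I − (1−α)P` lies in `[α, 2−α)`, and in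
particular `I − (1−α)P` is invertible. -/
theorem propagation_matrix_spectrum {n : ℕ} (hn : 1 ≤ n)
    (A : Matrix (Fin n) (Fin n) ℝ) (hA_symm : A.IsSymm)
    (hA01 : ∀ s t, A s t = 0 ∨ A s t = 1)
    (hloop : ∀ s, A s s = 1)
    (d : Fin n → ℝ) (hd : ∀ s, d s = ∑ t, A s t) (hd1 : ∀ s, 1 ≤ d s)
    (β : ℝ) (hβ0 : 0 ≤ β) (hβ1 : β ≤ 1)
    (P : Matrix (Fin n) (Fin n) ℝ)
    (hP : ∀ s t, P s t = A s t / (d s ^ β * d t ^ (1 - β))) :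
    (∀ μ : ℂ, μ ∈ spectrum ℂ (P.map (Complex.ofReal)) →
      μ.im = 0 ∧ -1 < μ.re ∧ μ.re ≤ 1) ∧
    ∀ α : ℝ, 0 < α → α < 1 →
      (∀ μ : ℂ, μ ∈ spectrum ℂ
          (((1 : Matrix (Fin n) (Fin n) ℝ) - (1 - α) • P).map (Complex.ofReal)) →
        μ.im = 0 ∧ α ≤ μ.re ∧ μ.re < 2 - α) ∧
      IsUnit ((1 : Matrix (Fin n) (Fin n) ℝ) - (1 - α) • P) :=
  propagation_matrix_spectrum_general A hA_symm hA01 hloop d hd β P hP
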